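/- arXiv:0812.3099 — 5 statements merged into one kernel-verified Lean document; each statement's English description precedes it below -/
import Mathlib

section
/- A quadratic form over a field of characteristic different from 2 that becomes isotropic over a finite field extension of odd degree is already isotropic over the base field (Springer's theorem). -/
/-!
In coordinates `q` becomes `c ↦ cᵀ M c` for a matrix `M` over `k`, and anisotropy of such a form
survives every extension of odd degree, by strong induction on the degree. A tower
`k ⊂ k⟮θ⟯ ⊂ L` reduces this to simple extensions `k[X]/(f)`, `f` irreducible of odd degree
`d`. An isotropic vector there lifts to polynomials `p` of degree `< d` with `f ∣ Q(p)`. Anisotropy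
over `k` forces `deg Q(p) = 2 max deg pᵢ`, so the cofactor `Q(p)/f` has odd degree `< d` and hence
an irreducible factor `h` of odd degree `< d`. Either `h` divides every `pᵢ`, and dividing it out
gives a counterexample of smaller degree, or `p mod h` is isotropic over `k[X]/(h)`, contradicting
the induction hypothesis.
-/

open Polynomial Module IntermediateField

universe u

theorem QuadraticMap.Anisotropic.comp {R M M' N : Type*} [CommRing R] [AddCommGroup M]
    [AddCommGroup M'] [AddCommGroup N] [Module R M] [Module R M'] [Module R N]
    {Q : QuadraticMap R M N} (hQ : Q.Anisotropic) {f : M' →ₗ[R] M} (hf : Function.Injective f) :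
    (Q.comp f).Anisotropic :=
  fun x hx => hf (by rw [hQ _ hx, map_zero])

theorem QuadraticMap.dvd_of_dvd_apply_smul {R M : Type*} [CommRing R] [AddCommGroup M]
    [Module R M] (Q : QuadraticMap R M R) {π a : R} (hπ : Prime π) (ha : ¬ π ∣ a) {x : M}
    (h : π ∣ Q (a • x)) : π ∣ Q x := by
  rw [QuadraticMap.map_smul, smul_eq_mul, mul_assoc] at h
  exact (hπ.dvd_or_dvd ((hπ.dvd_or_dvd h).resolve_left ha)).resolve_left ha

theorem Polynomial.exists_irreducible_odd_natDegree_dvd {k : Type*} [Field k] (g : k[X])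
    (hg : Odd g.natDegree) : ∃ h : k[X], Irreducible h ∧ Odd h.natDegree ∧ h ∣ g := by
  induction g using UniqueFactorizationMonoid.induction_on_prime with
  | h₁ => simp at hg
  | h₂ u hu => simp [natDegree_eq_zero_of_isUnit hu] at hg
  | h₃ a π ha hπ ih =>
    rw [natDegree_mul hπ.ne_zero ha, Nat.odd_add] at hg
    by_cases hπodd : Odd π.natDegree
    · exact ⟨π, hπ.irreducible, hπodd, dvd_mul_right π a⟩
    · obtain ⟨h, hh, hhodd, hha⟩ :=
        ih (Nat.not_even_iff_odd.mp fun hev => hπodd (hg.mpr hev))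
      exact ⟨h, hh, hhodd, hha.mul_left π⟩

theorem Polynomial.exists_ne_zero_natDegree_eq_sup {ι R : Type*} [Fintype ι] [Semiring R]
    {p : ι → R[X]} (hp : p ≠ 0) :
    ∃ i, p i ≠ 0 ∧ (p i).natDegree = Finset.univ.sup fun j => (p j).natDegree := by
  obtain ⟨j, hj⟩ := Function.ne_iff.mp hp
  obtain ⟨i, -, hi⟩ := Finset.exists_mem_eq_sup Finset.univ ⟨j, Finset.mem_univ j⟩
    fun j => (p j).natDegree
  by_cases hpi : p i = 0
  · refine ⟨j, hj, le_antisymm ?_ ?_⟩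
    · exact Finset.le_sup (f := fun j => (p j).natDegree) (Finset.mem_univ j)
    · simp [hi, hpi]
  · exact ⟨i, hpi, hi.symm⟩

theorem Polynomial.sup_natDegree_mul {ι R : Type*} [Fintype ι] [Semiring R] [NoZeroDivisors R]
    {h : R[X]} (hh : h ≠ 0) {r : ι → R[X]} (hr : r ≠ 0) :
    (Finset.univ.sup fun j => (h * r j).natDegree) =
      h.natDegree + Finset.univ.sup fun j => (r j).natDegree := by
  obtain ⟨i, hri, hi⟩ := exists_ne_zero_natDegree_eq_sup hr
  refine le_antisymm (Finset.sup_le fun j _ => natDegree_mul_le.trans ?_) ?_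
  · exact add_le_add_right (Finset.le_sup (f := fun j => (r j).natDegree) (Finset.mem_univ j)) _
  · rw [← hi, ← natDegree_mul hh hri]
    exact Finset.le_sup (f := fun j => (h * r j).natDegree) (Finset.mem_univ i)

theorem AdjoinRoot.exists_mk_eq_natDegree_lt {R : Type*} [CommRing R] {f : R[X]} (hf : f.Monic)
    (hf1 : f ≠ 1) (z : AdjoinRoot f) :
    ∃ p : R[X], mk f p = z ∧ p.natDegree < f.natDegree := by
  refine ⟨modByMonicHom hf z, mk_leftInverse hf z, ?_⟩
  obtain ⟨p, rfl⟩ := mk_surjective z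
  rw [modByMonicHom_mk]
  exact natDegree_modByMonic_lt p hf hf1

namespace Matrix

variable {ι : Type*} [Fintype ι] [DecidableEq ι]

theorem toQuadraticForm'_apply {R : Type*} [CommRing R] (M : Matrix ι ι R) (c : ι → R) :
    M.toQuadraticForm' c = ∑ i, ∑ j, M i j * (c i * c j) := by
  simp only [toQuadraticForm', LinearMap.BilinMap.toQuadraticMap_apply, toLinearMap₂'_apply',
    dotProduct, mulVec, Finset.mul_sum]
  exact Finset.sum_congr rfl fun i _ => Finset.sum_congr rfl fun j _ => by ring

theorem toQuadraticForm'_map {R S : Type*} [CommRing R] [CommRing S] (f : R →+* S)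
    (M : Matrix ι ι R) (c : ι → R) :
    (M.map f).toQuadraticForm' (f ∘ c) = f (M.toQuadraticForm' c) := by
  simp [toQuadraticForm'_apply, map_sum]

section Polynomial

variable {R : Type*} [CommRing R] (M : Matrix ι ι R) {p : ι → R[X]} {e : ℕ}

theorem natDegree_toQuadraticForm'_map_C_le (hp : ∀ i, (p i).natDegree ≤ e) :
    ((M.map C).toQuadraticForm' p).natDegree ≤ e + e := by
  rw [toQuadraticForm'_apply]
  refine natDegree_sum_le_of_forall_le _ _ fun i _ =>
    natDegree_sum_le_of_forall_le _ _ fun j _ => ?_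
  exact (natDegree_C_mul_le _ _).trans (natDegree_mul_le_of_le (hp i) (hp j))

theorem coeff_toQuadraticForm'_map_C (hp : ∀ i, (p i).natDegree ≤ e) :
    ((M.map C).toQuadraticForm' p).coeff (e + e) = M.toQuadraticForm' fun i => (p i).coeff e := by
  simp only [toQuadraticForm'_apply, finsetSum_coeff, map_apply, coeff_C_mul,
    coeff_mul_add_eq_of_natDegree_le (hp _) (hp _)]

theorem degree_toQuadraticForm'_map_C (hM : M.toQuadraticForm'.Anisotropic) {i : ι}
    (hpi : p i ≠ 0) (hmax : ∀ j, (p j).natDegree ≤ (p i).natDegree) :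
    ((M.map C).toQuadraticForm' p).degree = ↑((p i).natDegree + (p i).natDegree) := by
  refine degree_eq_of_le_of_coeff_ne_zero
    (degree_le_of_natDegree_le (natDegree_toQuadraticForm'_map_C_le M hmax)) ?_
  rw [coeff_toQuadraticForm'_map_C M hmax]
  exact fun h0 => leadingCoeff_ne_zero.mpr hpi (congrFun (hM _ h0) i)

theorem toQuadraticForm'_map_algebraMap_mk (f : R[X]) (p : ι → R[X]) :
    (M.map (algebraMap R (AdjoinRoot f))).toQuadraticForm' (AdjoinRoot.mk f ∘ p) =
      AdjoinRoot.mk f ((M.map C).toQuadraticForm' p) := by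
  rw [← toQuadraticForm'_map, map_map]
  rfl

end Polynomial

section AnisotropicOver

variable {R : Type*} [CommRing R]

def AnisotropicOver (A : Type*) [CommRing A] [Algebra R A] (M : Matrix ι ι R) : Prop :=
  (M.map (algebraMap R A)).toQuadraticForm'.Anisotropic

variable {M : Matrix ι ι R}

theorem anisotropicOver_self_iff : M.AnisotropicOver R ↔ M.toQuadraticForm'.Anisotropic := by
  rw [AnisotropicOver, Algebra.algebraMap_self, RingHom.coe_id, map_id]

theorem AnisotropicOver.of_bijective {A B : Type*} [CommRing A] [CommRing B] [Algebra R A]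
    [Algebra R B] (hA : M.AnisotropicOver A) (f : A →ₐ[R] B) (hf : Function.Bijective f) :
    M.AnisotropicOver B := by
  intro c hc
  obtain ⟨c', rfl⟩ : ∃ c', f ∘ c' = c := ⟨_, funext fun i => Function.surjInv_eq hf.2 (c i)⟩
  have hmap : M.map (algebraMap R B) = (M.map (algebraMap R A)).map f := by
    rw [map_map, ← AlgHom.coe_toRingHom, ← RingHom.coe_comp, AlgHom.comp_algebraMap]
  rw [hmap, show (f : A → B) = (f : A →+* B) from rfl, toQuadraticForm'_map] at hc
  rw [hA c' (hf.1 (by rwa [map_zero]))]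
  exact funext fun _ => map_zero f

theorem anisotropicOver_map_algebraMap_iff {K L : Type*} [CommRing K] [CommRing L] [Algebra R K]
    [Algebra K L] [Algebra R L] [IsScalarTower R K L] :
    (M.map (algebraMap R K)).AnisotropicOver L ↔ M.AnisotropicOver L := by
  rw [AnisotropicOver, AnisotropicOver, map_map, ← RingHom.coe_comp,
    ← IsScalarTower.algebraMap_eq]

end AnisotropicOver

section Springer

variable {k : Type*} [Field k] {M : Matrix ι ι k} {f : k[X]}

theorem odd_natDegree_of_toQuadraticForm'_map_C_eq_mul (hM : M.toQuadraticForm'.Anisotropic)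
    (hodd : Odd f.natDegree) {p : ι → k[X]} (hp : p ≠ 0)
    (hlt : ∀ j, (p j).natDegree < f.natDegree)
    {g : k[X]} (hg : (M.map C).toQuadraticForm' p = f * g) :
    g ≠ 0 ∧ Odd g.natDegree ∧ g.natDegree < f.natDegree := by
  obtain ⟨i, hpi, hpie⟩ := exists_ne_zero_natDegree_eq_sup hp
  have hQ := degree_toQuadraticForm'_map_C M hM hpi
    (fun j => hpie ▸ Finset.le_sup (f := fun j => (p j).natDegree) (Finset.mem_univ j))
  have hg0 : g ≠ 0 := by
    rintro rfl
    rw [hg, mul_zero, degree_zero] at hQ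
    exact WithBot.bot_ne_coe hQ
  have hf0 : f ≠ 0 := by rintro rfl; simp at hodd
  have hdeg : f.natDegree + g.natDegree = (p i).natDegree + (p i).natDegree := by
    rw [← natDegree_mul hf0 hg0, ← hg, natDegree_eq_of_degree_eq_some hQ]
  have hi := hlt i
  obtain ⟨t, ht⟩ := hodd
  exact ⟨hg0, ⟨(p i).natDegree - t - 1, by omega⟩, by omega⟩

theorem not_dvd_toQuadraticForm'_map_C (hM : M.toQuadraticForm'.Anisotropic) (hf : Irreducible f)
    (hodd : Odd f.natDegree)
    (hlower : ∀ h : k[X], Irreducible h → Odd h.natDegree → h.natDegree < f.natDegree →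
      M.AnisotropicOver (AdjoinRoot h))
    (p : ι → k[X]) (hp : p ≠ 0) (hlt : ∀ j, (p j).natDegree < f.natDegree) :
    ¬ f ∣ (M.map C).toQuadraticForm' p := by
  induction hn : Finset.univ.sup (fun j => (p j).natDegree) using Nat.strong_induction_on
    generalizing p with
  | _ e ih =>
  rintro ⟨g, hg⟩
  obtain ⟨hg0, hgodd, hglt⟩ := odd_natDegree_of_toQuadraticForm'_map_C_eq_mul hM hodd hp hlt hg
  obtain ⟨h, hh, hhodd, hhg⟩ := exists_irreducible_odd_natDegree_dvd g hgodd
  have hhlt : h.natDegree < f.natDegree := (natDegree_le_of_dvd hhg hg0).trans_lt hglt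
  by_cases hall : ∀ j, h ∣ p j
  · choose r hr using hall
    have hpr : p = h • r := funext hr
    have hr0 : r ≠ 0 := by rintro rfl; exact hp (by simp [hpr])
    have hsup := sup_natDegree_mul hh.ne_zero hr0
    simp only [← hr, hn] at hsup
    obtain ⟨i, -, hi⟩ := exists_ne_zero_natDegree_eq_sup hp
    have hei : e < f.natDegree := hn ▸ hi ▸ hlt i
    have hh1 := hh.natDegree_pos
    have hfh : ¬ f ∣ h := fun hfh => (natDegree_le_of_dvd hfh hh.ne_zero).not_gt hhlt
    refine ih _ (by omega) r hr0 (fun j => (Finset.le_sup (f := fun j => (r j).natDegree)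
      (Finset.mem_univ j)).trans_lt (by omega)) rfl ?_
    exact QuadraticMap.dvd_of_dvd_apply_smul _ hf.prime hfh (hpr ▸ ⟨g, hg⟩)
  · obtain ⟨j, hj⟩ := not_forall.mp hall
    have hiso :
        (M.map (algebraMap k (AdjoinRoot h))).toQuadraticForm' (AdjoinRoot.mk h ∘ p) = 0 := by
      rw [toQuadraticForm'_map_algebraMap_mk, AdjoinRoot.mk_eq_zero, hg]
      exact dvd_mul_of_dvd_right hhg f
    exact hj (AdjoinRoot.mk_eq_zero.mp (congrFun (hlower h hh hhodd hhlt _ hiso) j))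

theorem anisotropicOver_adjoinRoot (hM : M.toQuadraticForm'.Anisotropic) (hf : Irreducible f)
    (hmon : f.Monic) (hodd : Odd f.natDegree)
    (hlower : ∀ h : k[X], Irreducible h → Odd h.natDegree → h.natDegree < f.natDegree →
      M.AnisotropicOver (AdjoinRoot h)) :
    M.AnisotropicOver (AdjoinRoot f) := by
  intro c hc
  choose p hp hlt using fun i => AdjoinRoot.exists_mk_eq_natDegree_lt hmon hf.ne_one (c i)
  have hpc : AdjoinRoot.mk f ∘ p = c := funext hp
  by_contra hc0
  refine not_dvd_toQuadraticForm'_map_C hM hf hodd hlower p ?_ hlt ?_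
  · rintro rfl
    exact hc0 (hpc ▸ funext fun _ => map_zero _)
  · rw [← AdjoinRoot.mk_eq_zero, ← toQuadraticForm'_map_algebraMap_mk, hpc, hc]

theorem anisotropicOver_of_odd_finrank {k L : Type u} [Field k] [Field L] [Algebra k L]
    [FiniteDimensional k L] (hodd : Odd (finrank k L)) {M : Matrix ι ι k}
    (hM : M.toQuadraticForm'.Anisotropic) : M.AnisotropicOver L := by
  induction hn : finrank k L using Nat.strong_induction_on generalizing k L with
  | _ n ih =>
  rcases eq_or_ne (⊥ : Subalgebra k L) ⊤ with hbot | hbot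
  · exact (anisotropicOver_self_iff.mpr hM).of_bijective (Algebra.ofId k L)
      (Algebra.bijective_algebraMap_iff.mpr hbot.symm)
  obtain ⟨θ, -, hθ⟩ := SetLike.exists_of_lt hbot.lt_top
  have hθint : IsIntegral k θ := Algebra.IsIntegral.isIntegral θ
  have hK1 : finrank k k⟮θ⟯ ≠ 1 := by
    rwa [ne_eq, IntermediateField.finrank_eq_one_iff, adjoin_simple_eq_bot_iff,
      mem_bot, ← Algebra.mem_bot]
  have hmul : finrank k k⟮θ⟯ * finrank k⟮θ⟯ L = n := hn ▸ finrank_mul_finrank k k⟮θ⟯ L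
  obtain ⟨hoddK, hoddL⟩ := Nat.odd_mul.mp (hmul ▸ hn ▸ hodd)
  have hKn : finrank k k⟮θ⟯ ≤ n := Nat.le_of_dvd (hn ▸ hodd.pos) ⟨_, hmul.symm⟩
  have hK : M.AnisotropicOver k⟮θ⟯ := by
    have hdeg := adjoin.finrank hθint
    refine (anisotropicOver_adjoinRoot hM (minpoly.irreducible hθint) (minpoly.monic hθint)
      (hdeg ▸ hoddK) fun h hh hhodd hhlt => ?_).of_bijective
      (adjoinRootEquivAdjoin k hθint).toAlgHom (AlgEquiv.bijective _)
    have : Fact (Irreducible h) := ⟨hh⟩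
    let pb := AdjoinRoot.powerBasis hh.ne_zero
    have := pb.finite
    have hrank : finrank k (AdjoinRoot h) = h.natDegree := pb.finrank
    exact ih _ (hrank ▸ (hdeg ▸ hhlt).trans_le hKn) (hrank ▸ hhodd) hM rfl
  have hKL : finrank k⟮θ⟯ L < n := by
    have := finrank_pos (R := k) (M := k⟮θ⟯)
    exact hmul ▸ (Nat.lt_mul_iff_one_lt_left finrank_pos).mpr (by omega)
  exact anisotropicOver_map_algebraMap_iff.mp (ih _ hKL hoddL hK rfl)

end Springer

end Matrix

namespace QuadraticForm

variable {R V ι : Type*} [CommRing R] [Invertible (2 : R)] [AddCommGroup V] [Module R V]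
  [Fintype ι] [DecidableEq ι] (q : QuadraticForm R V) (b : Basis ι R V)

theorem toQuadraticForm'_toMatrix :
    (q.toMatrix b).toQuadraticForm' = q.comp b.equivFun.symm.toLinearMap := by
  ext c
  rw [QuadraticMap.comp_apply, LinearEquiv.coe_coe, ← QuadraticMap.associated_eq_self_apply R q,
    ← Matrix.toLinearMap₂_toMatrix₂ b b (QuadraticMap.associated q), Matrix.toLinearMap₂_apply,
    Matrix.toQuadraticForm'_apply]
  simp only [toMatrix, Basis.equivFun_symm_apply, Basis.repr_sum_self, smul_eq_mul]
  exact Finset.sum_congr rfl fun i _ => Finset.sum_congr rfl fun j _ => by ring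

theorem baseChange_eq_comp (A : Type*) [CommRing A] [Algebra R A] :
    q.baseChange A = ((q.toMatrix b).map (algebraMap R A)).toQuadraticForm'.comp
      (b.baseChange A).equivFun.toLinearMap := by
  ext v
  have hrepr : (b.baseChange A).equivFun (1 ⊗ₜ v) = algebraMap R A ∘ b.repr v := by
    ext i
    simp [Algebra.algebraMap_eq_smul_one]
  rw [QuadraticMap.comp_apply, LinearEquiv.coe_coe, hrepr, Matrix.toQuadraticForm'_map,
    toQuadraticForm'_toMatrix, baseChange_tmul]
  simp [Algebra.algebraMap_eq_smul_one]

end QuadraticForm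

theorem springer_odd_degree_descent_general
    (k : Type) [Field k] [Invertible (2 : k)]
    (L : Type) [Field L] [Algebra k L] [FiniteDimensional k L]
    (hodd : Odd (Module.finrank k L))
    (V : Type) [AddCommGroup V] [Module k V] [FiniteDimensional k V]
    (q : QuadraticForm k V)
    (hiso : ¬ (q.baseChange L).Anisotropic) :
    ¬ q.Anisotropic := by
  intro han
  apply hiso
  let b := Module.finBasis k V
  rw [q.baseChange_eq_comp b L]
  refine QuadraticMap.Anisotropic.comp (Matrix.anisotropicOver_of_odd_finrank hodd ?_)
    (b.baseChange L).equivFun.injective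
  rw [q.toQuadraticForm'_toMatrix b]
  exact han.comp b.equivFun.symm.injective

/-- **Springer's theorem.** A (nondegenerate) quadratic form over a field `k` of
characteristic different from `2` that becomes isotropic over a finite field extension
`L/k` of odd degree is already isotropic over `k`. Here isotropy of `q` over `L` is
phrased via the base change `q.baseChange L`, and "isotropic" means "not anisotropic",
i.e. there is a nonzero vector on which the form vanishes. -/
theorem springer_odd_degree_descent
    (k : Type) [Field k] [Invertible (2 : k)]
    (L : Type) [Field L] [Algebra k L] [FiniteDimensional k L]
    (hodd : Odd (Module.finrank k L))
    (V : Type) [AddCommGroup V] [Module k V] [FiniteDimensional k V]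
    (q : QuadraticForm k V)
    (hq : q.polarBilin.Nondegenerate)
    (hiso : ¬ (q.baseChange L).Anisotropic) :
    ¬ q.Anisotropic :=
  springer_odd_degree_descent_general k L hodd V q hiso
end

section
/- Let A be a complete discrete valuation ring with fraction field K and residue field k of characteristic ≠ 2, with uniformizer π. Let q = q₁ ⊥ π·q₂ where q₁, q₂ are nondegenerate diagonal quadratic forms with unit coefficients in A. Then q is isotropic over K if and only if the reduction of q₁ or the reduction of q₂ is isotropic over k. -/
/-!
Clearing denominators, `q` is isotropic over `K` iff `⟨u⟩ ⟂ ⟨π w⟩` has a nonzero zero over `A`,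
and dividing by a power of `π` we may assume some coordinate is a unit. If a `u`-coordinate is a
unit, reducing modulo `π` gives a zero of `q̄₁`; otherwise all `u`-coordinates are divisible by `π`
and dividing the equation by `π` before reducing gives a zero of `q̄₂`. Conversely, a zero of `q̄₁`
with nonzero coordinate `x̄ᵢ` lifts because, the other coordinates being fixed, `x̄ᵢ` is a simple
root of a quadratic `uᵢ X² + S` over `k` (here `char k ≠ 2` is used), so Hensel's lemma applies.
-/

open IsLocalRing Polynomial

def IsotropicDiag {R ι : Type*} [CommSemiring R] [Fintype ι] (c : ι → R) : Prop :=
  ∃ x : ι → R, x ≠ 0 ∧ ∑ i, c i * x i ^ 2 = 0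

section Isotropic

variable {R ι κ : Type*} [CommSemiring R] [Fintype ι] [Fintype κ]

theorem IsotropicDiag.mul_left {d : κ → R} (h : IsotropicDiag d) (t : R) :
    IsotropicDiag fun j => t * d j := by
  obtain ⟨y, hy, hsum⟩ := h
  exact ⟨y, hy, by simp only [mul_assoc, ← Finset.mul_sum, hsum, mul_zero]⟩

theorem IsotropicDiag.sumElim_left {c : ι → R} (h : IsotropicDiag c) (d : κ → R) :
    IsotropicDiag (Sum.elim c d) := by
  obtain ⟨x, hx, hsum⟩ := h
  refine ⟨Sum.elim x 0, fun h0 => hx ?_, ?_⟩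
  · simpa using congrArg (· ∘ Sum.inl) h0
  · simp [Fintype.sum_sum_type, hsum]

theorem IsotropicDiag.sumElim_right {d : κ → R} (h : IsotropicDiag d) (c : ι → R) :
    IsotropicDiag (Sum.elim c d) := by
  obtain ⟨y, hy, hsum⟩ := h
  refine ⟨Sum.elim 0 y, fun h0 => hy ?_, ?_⟩
  · simpa using congrArg (· ∘ Sum.inr) h0
  · simp [Fintype.sum_sum_type, hsum]

theorem isotropicDiag_sumElim_iff (c : ι → R) (t : R) (d : κ → R) :
    IsotropicDiag (Sum.elim c fun j => t * d j) ↔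
      ∃ xy : (ι → R) × (κ → R), xy ≠ 0 ∧
        ∑ i, c i * xy.1 i ^ 2 + t * ∑ j, d j * xy.2 j ^ 2 = 0 := by
  refine Iff.symm <| (Equiv.sumArrowEquivProdArrow ι κ R).symm.exists_congr_left.trans
    (exists_congr fun z => ?_)
  simp [Fintype.sum_sum_type, Finset.mul_sum, mul_assoc, funext_iff, Prod.ext_iff, Sum.forall]

end Isotropic

theorem isotropicDiag_algebraMap_iff {A K ι : Type*} [CommRing A] [IsDomain A] [Field K]
    [Algebra A K] [IsFractionRing A K] [Fintype ι] (c : ι → A) :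
    IsotropicDiag (fun i => algebraMap A K (c i)) ↔ IsotropicDiag c := by
  have hinj := IsFractionRing.injective A K
  constructor
  · rintro ⟨x, hx, hsum⟩
    obtain ⟨d, hd⟩ := IsLocalization.exist_integer_multiples_of_finite (nonZeroDivisors A) x
    choose a ha using hd
    have hd0 : algebraMap A K d ≠ 0 := IsFractionRing.to_map_ne_zero_of_mem_nonZeroDivisors d.2
    refine ⟨a, fun h0 => hx (funext fun i => ?_), hinj ?_⟩
    · have := ha i
      rw [h0, Pi.zero_apply, map_zero, Algebra.smul_def, eq_comm, mul_eq_zero] at this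
      exact this.resolve_left hd0
    · calc algebraMap A K (∑ i, c i * a i ^ 2)
          = algebraMap A K d ^ 2 * ∑ i, algebraMap A K (c i) * x i ^ 2 := by
            simp only [map_sum, map_mul, map_pow, ha, Algebra.smul_def, Finset.mul_sum]
            exact Finset.sum_congr rfl fun i _ => by ring
        _ = algebraMap A K 0 := by rw [hsum, mul_zero, map_zero]
  · rintro ⟨a, ha, hsum⟩
    refine ⟨fun i => algebraMap A K (a i), fun h0 => ha (funext fun i => hinj ?_), ?_⟩
    · simpa using congrFun h0 i
    · simpa [map_sum] using congrArg (algebraMap A K) hsum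

section Henselian

variable {A : Type*} [CommRing A] [IsLocalRing A] [HenselianRing A (maximalIdeal A)]

theorem exists_sq_eq_of_residue_eq_sq (hchar : (2 : ResidueField A) ≠ 0) {c : A}
    {y : ResidueField A} (hy : y ≠ 0) (hc : residue A c = y ^ 2) :
    ∃ t : A, t ^ 2 = c ∧ residue A t = y := by
  obtain ⟨b, rfl⟩ := residue_surjective y
  have hroot : (X ^ 2 - C c).eval b ∈ maximalIdeal A := by
    rw [← residue_eq_zero_iff]
    simp [hc]
  have hsimple :
      IsUnit (Ideal.Quotient.mk (maximalIdeal A) ((X ^ 2 - C c).derivative.eval b)) := by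
    have hder : (X ^ 2 - C c).derivative.eval b = 2 * b := by simp [one_add_one_eq_two]
    change IsUnit (residue A _)
    rw [hder, map_mul, map_ofNat]
    exact isUnit_iff_ne_zero.mpr (mul_ne_zero hchar hy)
  obtain ⟨t, ht, htb⟩ := HenselianRing.is_henselian (X ^ 2 - C c)
    (monic_X_pow_sub_C c two_ne_zero) b hroot hsimple
  refine ⟨t, by simpa [sub_eq_zero] using ht, ?_⟩
  rwa [← sub_eq_zero, ← map_sub, residue_eq_zero_iff]

theorem IsotropicDiag.of_residue {ι : Type*} [Fintype ι] (hchar : (2 : ResidueField A) ≠ 0)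
    {v : ι → Aˣ} (h : IsotropicDiag fun i => residue A (v i)) :
    IsotropicDiag fun i => (v i : A) := by
  classical
  obtain ⟨y, hy, hsum⟩ := h
  obtain ⟨i₀, hi₀⟩ := Function.ne_iff.mp hy
  choose x hx using fun i => residue_surjective (y i)
  set S := ∑ i ∈ {i₀}ᶜ, (v i : A) * x i ^ 2
  have hS : residue A S = -(residue A (v i₀) * y i₀ ^ 2) := by
    rw [Fintype.sum_eq_add_sum_compl i₀] at hsum
    simp only [S, map_sum, map_mul, map_pow, hx]
    linear_combination hsum
  have hc : residue A (-(↑(v i₀)⁻¹ * S)) = y i₀ ^ 2 := by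
    rw [map_neg, map_mul, hS, mul_neg, neg_neg, ← mul_assoc, ← map_mul, Units.inv_mul, map_one,
      one_mul]
  obtain ⟨t, ht, hty⟩ := exists_sq_eq_of_residue_eq_sq hchar hi₀ hc
  refine ⟨Function.update x i₀ t, fun h0 => hi₀ ?_, ?_⟩
  · simpa [hty] using congrArg (residue A) (congrFun h0 i₀)
  · have hrest : ∑ i ∈ {i₀}ᶜ, (v i : A) * Function.update x i₀ t i ^ 2 = S :=
      Finset.sum_congr rfl fun i hi => by rw [Function.update_of_ne (by simpa using hi)]
    rw [Fintype.sum_eq_add_sum_compl i₀, hrest, Function.update_self, ht, mul_neg, ← mul_assoc,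
      Units.mul_inv, one_mul, neg_add_cancel]

end Henselian

section DVR

variable {A : Type*} [CommRing A] [IsDomain A] [IsDiscreteValuationRing A]

theorem IsDiscreteValuationRing.exists_pow_mul_of_ne_zero {ι : Type*} [Fintype ι] {ϖ : A}
    (hϖ : Irreducible ϖ) {a : ι → A} (ha : a ≠ 0) :
    ∃ (n : ℕ) (b : ι → A), (∃ i, IsUnit (b i)) ∧ ∀ i, a i = ϖ ^ n * b i := by
  set I := Ideal.span (Set.range a)
  have hI : I ≠ ⊥ := by
    obtain ⟨i, hi⟩ := Function.ne_iff.mp ha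
    intro h
    have hai : a i ∈ I := Ideal.subset_span ⟨i, rfl⟩
    exact hi (by rwa [h, Ideal.mem_bot] at hai)
  obtain ⟨n, hn⟩ := ideal_eq_span_pow_irreducible hI hϖ
  have hdvd : ∀ i, ϖ ^ n ∣ a i := fun i => by
    rw [← Ideal.mem_span_singleton, ← hn]
    exact Ideal.subset_span ⟨i, rfl⟩
  choose b hb using hdvd
  refine ⟨n, b, ?_, hb⟩
  -- the `a i` generate `(ϖ ^ n)`, so the `b i` generate the unit ideal
  by_contra! hnu
  have hϖn : ϖ ^ n ∈ I := by
    rw [hn]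
    exact Ideal.mem_span_singleton_self _
  obtain ⟨e, he⟩ := (Submodule.mem_span_range_iff_exists_fun A).mp hϖn
  have hone : ∑ i, e i * b i = 1 := by
    refine mul_left_cancel₀ (pow_ne_zero n hϖ.ne_zero) ?_
    rw [mul_one, Finset.mul_sum]
    conv_rhs => rw [← he]
    exact Finset.sum_congr rfl fun i _ => by rw [hb i, smul_eq_mul]; ring
  exact (maximalIdeal.isMaximal A).ne_top <| (Ideal.eq_top_iff_one _).mpr <|
    hone ▸ Ideal.sum_mem _ fun i _ => Ideal.mul_mem_left _ _ ((mem_maximalIdeal _).mpr (hnu i))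

theorem isotropicDiag_residue_of_isUnit {ι : Type*} [Fintype ι] (v : ι → A) {x : ι → A} {i : ι}
    (hi : IsUnit (x i)) (h : residue A (∑ i, v i * x i ^ 2) = 0) :
    IsotropicDiag fun i => residue A (v i) := by
  refine ⟨fun i => residue A (x i), fun h0 => (residue_ne_zero_iff_isUnit _).mpr hi ?_, ?_⟩
  · exact congrFun h0 i
  · simpa only [map_sum, map_mul, map_pow] using h

theorem IsotropicDiag.exists_isUnit_apply {ι : Type*} [Fintype ι] {c : ι → A}
    (h : IsotropicDiag c) : ∃ z : ι → A, (∃ i, IsUnit (z i)) ∧ ∑ i, c i * z i ^ 2 = 0 := by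
  obtain ⟨x, hx, hsum⟩ := h
  obtain ⟨ϖ, hϖ⟩ := IsDiscreteValuationRing.exists_irreducible A
  obtain ⟨n, z, hz, hxz⟩ := IsDiscreteValuationRing.exists_pow_mul_of_ne_zero hϖ hx
  refine ⟨z, hz, mul_left_cancel₀ (pow_ne_zero (2 * n) hϖ.ne_zero) ?_⟩
  rw [mul_zero, ← hsum, Finset.mul_sum]
  exact Finset.sum_congr rfl fun i _ => by rw [hxz i]; ring

theorem isotropicDiag_residue_or_of_isUnit_apply {ι κ : Type*} [Fintype ι] [Fintype κ] {π : A}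
    (hπ : Irreducible π) (u : ι → Aˣ) (w : κ → Aˣ) {z : ι ⊕ κ → A} (hz : ∃ k, IsUnit (z k))
    (h : ∑ k, Sum.elim (fun i => (u i : A)) (fun j => π * w j) k * z k ^ 2 = 0) :
    (IsotropicDiag fun i => residue A (u i)) ∨ IsotropicDiag fun j => residue A (w j) := by
  have hπ0 : residue A π = 0 := (residue_eq_zero_iff π).mpr hπ.not_isUnit
  simp only [Fintype.sum_sum_type, Sum.elim_inl, Sum.elim_inr, mul_assoc, ← Finset.mul_sum] at h
  by_cases hu : ∃ i, IsUnit (z (.inl i))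
  · obtain ⟨i, hi⟩ := hu
    left
    refine isotropicDiag_residue_of_isUnit _ (x := fun i => z (.inl i)) hi ?_
    simpa [hπ0] using congrArg (residue A) h
  · rw [not_exists] at hu
    obtain ⟨j, hj⟩ : ∃ j, IsUnit (z (.inr j)) := by
      obtain ⟨k | j, hk⟩ := hz
      exacts [(hu k hk).elim, ⟨j, hk⟩]
    have hdvd : ∀ i, π ∣ z (.inl i) := fun i => by
      rw [← Ideal.mem_span_singleton, ← hπ.maximalIdeal_eq, mem_maximalIdeal]
      exact hu i
    choose a ha using hdvd
    have hw : ∑ j, (w j : A) * z (.inr j) ^ 2 = -(π * ∑ i, (u i : A) * a i ^ 2) := by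
      have hu' : ∑ i, (u i : A) * z (.inl i) ^ 2 = π * (π * ∑ i, (u i : A) * a i ^ 2) := by
        simp only [ha, Finset.mul_sum]
        exact Finset.sum_congr rfl fun i _ => by ring
      refine mul_left_cancel₀ hπ.ne_zero ?_
      linear_combination h - hu'
    right
    refine isotropicDiag_residue_of_isUnit _ (x := fun j => z (.inr j)) hj ?_
    simp [hw, hπ0]

end DVR

/-- **Springer's theorem for complete discretely valued fields.**
Let `A` be a complete discrete valuation ring with fraction field `K` and residue field
`k` of characteristic `≠ 2`, and let `π` be a uniformizer.  Let
`q = q₁ ⟂ π·q₂` where `q₁ = ⟨u₁,…,u_r⟩` and `q₂ = ⟨w₁,…,w_s⟩` are nondegenerate diagonal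
quadratic forms with unit coefficients in `A`.  Then `q` is isotropic over `K` if and only
if the reduction of `q₁` or the reduction of `q₂` is isotropic over `k`. -/
theorem springer_complete_dvr_isotropy
    (A : Type) [CommRing A] [IsDomain A] [IsDiscreteValuationRing A]
    [IsAdicComplete (maximalIdeal A) A]
    (hchar : (2 : ResidueField A) ≠ 0)
    (π : A) (hπ : Irreducible π)
    (r s : ℕ) (u : Fin r → Aˣ) (w : Fin s → Aˣ) :
    (∃ xy : (Fin r → FractionRing A) × (Fin s → FractionRing A), xy ≠ 0 ∧
        (∑ i, algebraMap A (FractionRing A) (u i) * xy.1 i ^ 2) +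
          algebraMap A (FractionRing A) π *
            (∑ j, algebraMap A (FractionRing A) (w j) * xy.2 j ^ 2) = 0)
      ↔ ((∃ x : Fin r → ResidueField A, x ≠ 0 ∧
            ∑ i, residue A (u i) * x i ^ 2 = 0) ∨
          (∃ y : Fin s → ResidueField A, y ≠ 0 ∧
            ∑ j, residue A (w j) * y j ^ 2 = 0)) := by
  set c : Fin r ⊕ Fin s → A := Sum.elim (fun i => (u i : A)) fun j => π * w j
  have hc : (Sum.elim (fun i => algebraMap A (FractionRing A) (u i)) fun j =>
      algebraMap A (FractionRing A) π * algebraMap A (FractionRing A) (w j)) =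
        fun k => algebraMap A (FractionRing A) (c k) := by
    ext (i | j) <;> simp [c]
  rw [← isotropicDiag_sumElim_iff, hc, isotropicDiag_algebraMap_iff]
  constructor
  · intro h
    obtain ⟨z, hz, hsum⟩ := h.exists_isUnit_apply
    exact isotropicDiag_residue_or_of_isUnit_apply hπ u w hz hsum
  · rintro (h | h)
    · exact (IsotropicDiag.of_residue hchar h).sumElim_left _
    · exact ((IsotropicDiag.of_residue hchar h).mul_left π).sumElim_right _
end

section
/- Let K be a field of characteristic ≠ 2, and f, g two quadratic forms in n+1 variables over K such that the projective variety {f = g = 0} has no K-point. Then the quadratic form f + t·g in n+1 variables over the rational function field K(t) has no nontrivial zero (Amer–Brumer theorem). -/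
/-!
Over `K[t]` the form `f + t g` is the quadratic form of the matrix pencil `M_f + t M_g`, and after
clearing denominators it suffices to show that it has no nonzero zero `v` with polynomial
entries. Write `v = t^d a + r` with `a ∈ K^{n+1}` and `deg r < d`. The coefficient of `t^{2d+1}`
in `f(v) + t g(v)` is `g(a)`, so `g(a) = 0`; if also `f(a) = 0` then `a = 0` and `v = r` has
lower degree. Otherwise `Q(a) = f(a) ≠ 0` for `Q = f + t g`, and the coefficient of `t^{2d}`
shows that `w = Q(a) v - B(v, a) a`, with `B` the polar form of `Q`, has degree `< d`. Since
`Q(w) = Q(a)^2 Q(v) = 0`, by induction `w = 0`, i.e. `v` is proportional to `a`, which is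
impossible for a zero of `Q` unless `v = 0`.
-/

theorem Finsupp.exists_eq_single_add_single_of_degree_eq_two {σ : Type*} {d : σ →₀ ℕ}
    (hd : d.degree = 2) : ∃ i j, d = single i 1 + single j 1 := by
  classical
  obtain ⟨i, j, hij⟩ := Multiset.card_eq_two.mp <| by
    rw [Finsupp.card_toMultiset]; simpa [Finsupp.degree_apply, Finsupp.sum] using hd
  refine ⟨i, j, ?_⟩
  rw [← Finsupp.toMultiset_toFinsupp d, hij, Multiset.insert_eq_cons, ← Multiset.singleton_add,
    Multiset.toFinsupp_add, Multiset.toFinsupp_singleton, Multiset.toFinsupp_singleton]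

universe u

open scoped Matrix in
theorem MvPolynomial.IsHomogeneous.exists_matrix_eval₂_eq {K σ : Type*} [CommSemiring K]
    [Fintype σ] [DecidableEq σ] {f : MvPolynomial σ K} (hf : f.IsHomogeneous 2) :
    ∃ M : Matrix σ σ K, ∀ {A : Type u} [CommSemiring A] (φ : K →+* A) (x : σ → A),
      MvPolynomial.eval₂ φ x f = x ⬝ᵥ M.map φ *ᵥ x := by
  rw [f.as_sum]
  refine Finset.sum_induction _ (fun p => ∃ M : Matrix σ σ K, ∀ {A : Type u} [CommSemiring A]
      (φ : K →+* A) (x : σ → A), MvPolynomial.eval₂ φ x p = x ⬝ᵥ M.map φ *ᵥ x)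
    (fun p q ⟨Mp, hp⟩ ⟨Mq, hq⟩ => ⟨Mp + Mq, fun φ x => ?_⟩) ⟨0, fun φ x => by simp⟩
    fun d hd => ?_
  · simp [hp, hq, Matrix.map_add, Matrix.add_mulVec]
  · have hd2 : d.degree = 2 := by
      rw [Finsupp.degree_eq_weight_one]; exact hf (mem_support_iff.mp hd)
    obtain ⟨i, j, rfl⟩ := Finsupp.exists_eq_single_add_single_of_degree_eq_two hd2
    refine ⟨Matrix.single i j (f.coeff (Finsupp.single i 1 + Finsupp.single j 1)),
      fun φ x => ?_⟩
    simp [eval₂_monomial, Finsupp.prod_add_index, pow_add, Matrix.single_mulVec, dotProduct,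
      Function.update_apply]
    ring

namespace QuadraticMap

variable {R M : Type*} [CommRing R] [AddCommGroup M] [Module R M] (Q : QuadraticMap R M R)

theorem map_smul_sub_polar_smul (v y : M) :
    Q (Q y • v - polar Q v y • y) = Q y ^ 2 * Q v := by
  rw [sub_eq_add_neg, QuadraticMap.map_add Q, ← neg_smul, Q.map_smul, Q.map_smul, polar_smul_left,
    polar_smul_right]
  simp only [smul_eq_mul]
  ring

theorem eq_zero_of_smul_eq_smul [IsDomain R] [NoZeroSMulDivisors R M] {v y : M} {s t : R}
    (hv : Q v = 0) (hy : Q y ≠ 0) (hs : s ≠ 0) (h : s • v = t • y) : v = 0 := by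
  have ht : t = 0 := by
    have := congrArg Q h
    rw [Q.map_smul, Q.map_smul, hv, smul_zero, smul_eq_mul, eq_comm, mul_eq_zero] at this
    exact mul_self_eq_zero.mp (this.resolve_right hy)
  rwa [ht, zero_smul, smul_eq_zero, or_iff_right hs] at h

end QuadraticMap

namespace Matrix

variable {ι R : Type*} [Fintype ι] [DecidableEq ι] [CommRing R] (N : Matrix ι ι R)

theorem toQuadraticForm'_apply_s5 (x : ι → R) : N.toQuadraticForm' x = x ⬝ᵥ N *ᵥ x :=
  toLinearMap₂'_apply' N x x

theorem polar_toQuadraticForm' (x y : ι → R) :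
    QuadraticMap.polar N.toQuadraticForm' x y = x ⬝ᵥ N *ᵥ y + y ⬝ᵥ N *ᵥ x := by
  rw [toQuadraticForm', LinearMap.BilinMap.polar_toQuadraticMap, toLinearMap₂'_apply',
    toLinearMap₂'_apply']

theorem map_toQuadraticForm' {S : Type*} [CommRing S] (φ : R →+* S) (x : ι → R) :
    φ (N.toQuadraticForm' x) = (N.map φ).toQuadraticForm' (φ ∘ x) := by
  rw [toQuadraticForm'_apply_s5, toQuadraticForm'_apply_s5, RingHom.map_dotProduct]
  congr 1
  ext i
  exact RingHom.map_mulVec φ N x i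

theorem anisotropic_toQuadraticForm'_map_algebraMap [IsDomain R] (F : Type*) [Field F]
    [Algebra R F] [IsFractionRing R F] (hN : N.toQuadraticForm'.Anisotropic) :
    (N.map (algebraMap R F)).toQuadraticForm'.Anisotropic := by
  intro x hx
  obtain ⟨b, hb⟩ := IsLocalization.exist_integer_multiples_of_finite (nonZeroDivisors R) x
  choose p hp using hb
  have hb0 : algebraMap R F b ≠ 0 :=
    IsFractionRing.to_map_ne_zero_of_mem_nonZeroDivisors b.2
  have hpx : algebraMap R F ∘ p = algebraMap R F b • x := by
    ext i; rw [Function.comp_apply, hp i, Algebra.smul_def, Pi.smul_apply, smul_eq_mul]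
  have hp0 : p = 0 := hN p <| IsFractionRing.injective R F <| by
    rw [map_toQuadraticForm', hpx, QuadraticMap.map_smul, hx, smul_zero, map_zero]
  ext i
  simpa [hp0, hb0] using (congrFun hpx i).symm

end Matrix

namespace Polynomial

open scoped Matrix

theorem degree_mul_mul_lt {R : Type*} [Semiring R] {p q s : R[X]} {a b : ℕ}
    (hp : degree p < a) (hq : degree q ≤ 1) (hs : degree s < b) :
    degree (p * (q * s)) < ↑(a + b) := by
  rcases eq_or_ne p 0 with rfl | hp0
  · rw [zero_mul, degree_zero]; exact WithBot.bot_lt_coe _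
  rcases eq_or_ne s 0 with rfl | hs0
  · rw [mul_zero, mul_zero, degree_zero]; exact WithBot.bot_lt_coe _
  rw [← natDegree_lt_iff_degree_lt hp0] at hp
  rw [← natDegree_lt_iff_degree_lt hs0] at hs
  have hq' : natDegree q ≤ 1 := natDegree_le_of_degree_le hq
  have h1 : natDegree (p * (q * s)) ≤ natDegree p + (natDegree q + natDegree s) :=
    natDegree_mul_le.trans (Nat.add_le_add_left natDegree_mul_le _)
  exact degree_le_natDegree.trans_lt (Nat.cast_lt.2 (by omega))

theorem degree_sub_C_coeff_mul_X_pow_lt {R : Type*} [Ring R] {p : R[X]} {d : ℕ}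
    (hp : degree p < ↑(d + 1)) : degree (p - C (p.coeff d) * X ^ d) < d := by
  rw [degree_lt_iff_coeff_zero] at hp ⊢
  intro m hm
  rcases hm.eq_or_lt with rfl | hm
  · simp
  · simp [hp m hm, hm.ne']

theorem degree_dotProduct_mulVec_lt {R ι : Type*} [Semiring R] [Fintype ι]
    {N : Matrix ι ι R[X]} {x y : ι → R[X]} {a b : ℕ} (hN : ∀ i j, degree (N i j) ≤ 1)
    (hx : ∀ i, degree (x i) < a) (hy : ∀ j, degree (y j) < b) :
    degree (x ⬝ᵥ N *ᵥ y) < ↑(a + b) := by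
  rw [← mem_degreeLT]
  refine Submodule.sum_mem _ fun i _ => ?_
  rw [Matrix.mulVec, dotProduct, Finset.mul_sum]
  exact Submodule.sum_mem _ fun j _ => mem_degreeLT.2 (degree_mul_mul_lt (hx i) (hN i j) (hy j))

variable {K ι : Type*} [Field K]

noncomputable def pencil (M₁ M₂ : Matrix ι ι K) : Matrix ι ι K[X] :=
  M₁.map C + (X : K[X]) • M₂.map C

variable (M₁ M₂ : Matrix ι ι K)

theorem degree_pencil_apply_le (i j : ι) : degree (pencil M₁ M₂ i j) ≤ 1 := by
  rw [pencil, Matrix.add_apply, Matrix.smul_apply, smul_eq_mul, Matrix.map_apply,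
    Matrix.map_apply]
  compute_degree

variable [Fintype ι] [DecidableEq ι]

theorem pencil_map_toQuadraticForm' {S : Type*} [CommRing S] (φ : K[X] →+* S) (x : ι → S) :
    ((pencil M₁ M₂).map φ).toQuadraticForm' x =
      (M₁.map (φ.comp C)).toQuadraticForm' x +
        φ X * (M₂.map (φ.comp C)).toQuadraticForm' x := by
  rw [pencil, Matrix.map_add φ (map_add φ), Matrix.map_smul' φ X _ (map_mul φ), Matrix.map_map,
    Matrix.map_map, Matrix.toQuadraticForm'_apply_s5, Matrix.toQuadraticForm'_apply_s5,
    Matrix.toQuadraticForm'_apply_s5, Matrix.add_mulVec, Matrix.smul_mulVec, dotProduct_add,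
    dotProduct_smul, smul_eq_mul, RingHom.coe_comp]

theorem pencil_toQuadraticForm'_C (a : ι → K) :
    (pencil M₁ M₂).toQuadraticForm' (C ∘ a) =
      C (M₁.toQuadraticForm' a) + X * C (M₂.toQuadraticForm' a) := by
  rw [← Matrix.map_id (pencil M₁ M₂), ← RingHom.coe_id, pencil_map_toQuadraticForm',
    RingHom.id_comp, Matrix.map_toQuadraticForm', Matrix.map_toQuadraticForm', RingHom.id_apply]

variable {M₁ M₂}

theorem pencil_leading_terms {d : ℕ} {a : ι → K} {r : ι → K[X]} (hr : ∀ i, degree (r i) < d)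
    (hv : (pencil M₁ M₂).toQuadraticForm' ((X : K[X]) ^ d • (C ∘ a) + r) = 0) :
    M₂.toQuadraticForm' a = 0 ∧
      degree (X ^ d * C (M₁.toQuadraticForm' a) +
        QuadraticMap.polar (pencil M₁ M₂).toQuadraticForm' (C ∘ a) r) < d := by
  set Φ := (pencil M₁ M₂).toQuadraticForm'
  have hN := degree_pencil_apply_le M₁ M₂
  have hC : ∀ i, degree (C (a i)) < 1 := fun i => degree_C_lt
  have hΦr : degree (Φ r) < ↑(d + d) := by
    rw [Matrix.toQuadraticForm'_apply_s5]
    exact degree_dotProduct_mulVec_lt hN hr hr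
  have hpolar : degree (QuadraticMap.polar Φ (C ∘ a) r) < ↑(1 + d) := by
    rw [Matrix.polar_toQuadraticForm', ← mem_degreeLT]
    refine add_mem (mem_degreeLT.2 (degree_dotProduct_mulVec_lt hN hC hr)) ?_
    rw [add_comm]
    exact mem_degreeLT.2 (degree_dotProduct_mulVec_lt hN hr hC)
  have hexp : Φ ((X : K[X]) ^ d • (C ∘ a) + r) =
      X ^ d * (X ^ d * Φ (C ∘ a)) + X ^ d * QuadraticMap.polar Φ (C ∘ a) r + Φ r := by
    rw [QuadraticMap.map_add Φ, Φ.map_smul, QuadraticMap.polar_smul_left, smul_eq_mul,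
      smul_eq_mul]
    ring
  rw [hexp, pencil_toQuadraticForm'_C] at hv
  have hq₂ : M₂.toQuadraticForm' a = 0 := by
    have := congrArg (coeff · (1 + d + d)) hv
    simp only [coeff_add, coeff_X_pow_mul, coeff_zero] at this
    rwa [coeff_eq_zero_of_degree_lt hpolar, (degree_lt_iff_coeff_zero _ _).1 hΦr _ (by omega),
      coeff_C_succ, coeff_X_mul, coeff_C_zero, zero_add, add_zero, add_zero] at this
  refine ⟨hq₂, ?_⟩
  have hγ : X ^ d * (X ^ d * C (M₁.toQuadraticForm' a) + QuadraticMap.polar Φ (C ∘ a) r) =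
      -Φ r := by
    rw [hq₂, map_zero, mul_zero, add_zero] at hv
    linear_combination hv
  rw [degree_lt_iff_coeff_zero]
  intro m hm
  rw [← coeff_X_pow_mul _ d, hγ, coeff_neg, (degree_lt_iff_coeff_zero _ _).1 hΦr _ (by omega),
    neg_zero]

theorem pencil_descent_step (h : ∀ a : ι → K, M₁.toQuadraticForm' a = 0 →
      M₂.toQuadraticForm' a = 0 → a = 0) {d : ℕ}
    (ih : ∀ w : ι → K[X], (∀ i, degree (w i) < d) → (pencil M₁ M₂).toQuadraticForm' w = 0 →
      w = 0)
    {v : ι → K[X]} (hv : ∀ i, degree (v i) < ↑(d + 1))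
    (hΦv : (pencil M₁ M₂).toQuadraticForm' v = 0) : v = 0 := by
  set Φ := (pencil M₁ M₂).toQuadraticForm'
  set a : ι → K := fun i => (v i).coeff d
  set r : ι → K[X] := v - (X : K[X]) ^ d • (C ∘ a) with hr_def
  have hr : ∀ i, degree (r i) < d := fun i => by
    change degree (v i - X ^ d * C ((v i).coeff d)) < d
    rw [mul_comm]
    exact degree_sub_C_coeff_mul_X_pow_lt (hv i)
  have hvr : v = (X : K[X]) ^ d • (C ∘ a) + r := (add_sub_cancel _ _).symm
  obtain ⟨hq₂, hγ⟩ := pencil_leading_terms hr (hvr ▸ hΦv)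
  set γ := X ^ d * C (M₁.toQuadraticForm' a) + QuadraticMap.polar Φ (C ∘ a) r with hγ_def
  by_cases hq₁ : M₁.toQuadraticForm' a = 0
  · have hvr' : v = r := by rw [hvr, h a hq₁ hq₂]; simp
    rw [hvr'] at hΦv ⊢
    exact ih r hr hΦv
  have hΦA : Φ (C ∘ a) = C (M₁.toQuadraticForm' a) := by
    rw [pencil_toQuadraticForm'_C, hq₂, map_zero, mul_zero, add_zero]
  have hw : Φ (C ∘ a) • v - QuadraticMap.polar Φ v (C ∘ a) • (C ∘ a) =
      C (M₁.toQuadraticForm' a) • r - γ • (C ∘ a) := by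
    rw [hvr, QuadraticMap.polar_add_left, QuadraticMap.polar_smul_left, QuadraticMap.polar_self,
      QuadraticMap.polar_comm Φ r, hΦA, hγ_def]
    module
  have hw_deg : ∀ i, degree ((C (M₁.toQuadraticForm' a) • r - γ • (C ∘ a)) i) < d := by
    intro i
    simp only [Pi.sub_apply, Pi.smul_apply, smul_eq_mul, Function.comp_apply]
    rw [← mem_degreeLT, mul_comm γ, ← smul_eq_C_mul, ← smul_eq_C_mul]
    exact sub_mem (Submodule.smul_mem _ _ (mem_degreeLT.2 (hr i)))
      (Submodule.smul_mem _ _ (mem_degreeLT.2 hγ))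
  have hw0 := ih _ hw_deg (by rw [← hw, QuadraticMap.map_smul_sub_polar_smul, hΦv, mul_zero])
  rw [← hw, sub_eq_zero] at hw0
  have hΦA0 : Φ (C ∘ a) ≠ 0 := by rwa [hΦA, Ne, C_eq_zero]
  exact Φ.eq_zero_of_smul_eq_smul hΦv hΦA0 hΦA0 hw0

theorem anisotropic_pencil (h : ∀ a : ι → K, M₁.toQuadraticForm' a = 0 →
      M₂.toQuadraticForm' a = 0 → a = 0) :
    (pencil M₁ M₂).toQuadraticForm'.Anisotropic := by
  intro v hv
  obtain ⟨d, hd⟩ : ∃ d : ℕ, ∀ i, degree (v i) < d :=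
    ⟨Finset.univ.sup (fun i => natDegree (v i)) + 1, fun i => degree_le_natDegree.trans_lt
      (Nat.cast_lt.2 (Nat.lt_succ_of_le
        (Finset.le_sup (f := fun i => natDegree (v i)) (Finset.mem_univ i))))⟩
  induction d generalizing v with
  | zero => funext i; simpa using hd i
  | succ d ih => exact pencil_descent_step h (fun w hw hΦw => ih w hΦw hw) hd hv

end Polynomial

open MvPolynomial

theorem amer_brumer_general
    (K : Type) [Field K]
    (n : ℕ) (f g : MvPolynomial (Fin (n + 1)) K)
    (hf : f.IsHomogeneous 2) (hg : g.IsHomogeneous 2)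
    (hnoK : ∀ x : Fin (n + 1) → K, eval x f = 0 → eval x g = 0 → x = 0) :
    ∀ X : Fin (n + 1) → RatFunc K,
      eval X (f.map (algebraMap K (RatFunc K))) +
          RatFunc.X * eval X (g.map (algebraMap K (RatFunc K))) = 0 →
        X = 0 := by
  obtain ⟨Mf, hMf⟩ := hf.exists_matrix_eval₂_eq
  obtain ⟨Mg, hMg⟩ := hg.exists_matrix_eval₂_eq
  have hK := Polynomial.anisotropic_pencil (M₁ := Mf) (M₂ := Mg) fun a h₁ h₂ => hnoK a
    (by rwa [← eval₂_id, hMf, RingHom.coe_id, Matrix.map_id, ← Matrix.toQuadraticForm'_apply_s5])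
    (by rwa [← eval₂_id, hMg, RingHom.coe_id, Matrix.map_id, ← Matrix.toQuadraticForm'_apply_s5])
  intro X hX
  refine (Polynomial.pencil Mf Mg).anisotropic_toQuadraticForm'_map_algebraMap (RatFunc K) hK X
    ?_
  rw [eval_map, eval_map, hMf, hMg] at hX
  rw [← hX, Polynomial.pencil_map_toQuadraticForm', ← Polynomial.algebraMap_eq,
    ← IsScalarTower.algebraMap_eq, RatFunc.algebraMap_X, Matrix.toQuadraticForm'_apply_s5,
    Matrix.toQuadraticForm'_apply_s5]

/-- **Amer–Brumer theorem.** Let `K` be a field of characteristic `≠ 2` and `f`, `g`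
two quadratic forms (homogeneous polynomials of degree 2) in `n+1` variables over `K`
whose common projective zero locus `{f = g = 0}` has no `K`-point, i.e. the only common
zero of `f` and `g` over `K` is the trivial one.  Then the quadratic form `f + t·g`
over the rational function field `K(t)` has no nontrivial zero. -/
theorem amer_brumer
    (K : Type) [Field K] (hchar : (2 : K) ≠ 0)
    (n : ℕ) (f g : MvPolynomial (Fin (n + 1)) K)
    (hf : f.IsHomogeneous 2) (hg : g.IsHomogeneous 2)
    (hnoK : ∀ x : Fin (n + 1) → K, eval x f = 0 → eval x g = 0 → x = 0) :
    ∀ X : Fin (n + 1) → RatFunc K,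
      eval X (f.map (algebraMap K (RatFunc K))) +
          RatFunc.X * eval X (g.map (algebraMap K (RatFunc K))) = 0 →
        X = 0 :=
  amer_brumer_general K n f g hf hg hnoK
end

section
/- Let p ≡ 1 (mod 4) be a prime, u ∈ Z_p^× a non-square unit, s ≥ 2 an integer. Then the system f = x₁² + u x₂² + p x₃² + u p^{2s} x₄² + p^{2s-2} x₅² = 0, g = p^{4s+1} x₁² + p^{4s} x₂² + u p^{2s} x₃² + x₄² + p x₅² = 0 has no nontrivial solution in Q_p^5. -/
/-!
Scaling a nonzero `ℚ_p`-solution by the inverse of a coordinate of largest norm gives a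
`ℤ_p`-solution with a coordinate equal to `1`, so it suffices to show that every `ℤ_p`-solution is
divisible by `p`. Modulo `p`, `g` gives `p ∣ x₄`, and then modulo `p²` it gives `p ∣ x₅`. Since
`s ≥ 2`, `f` modulo `p` now reads `x₁² + u x₂² ≡ 0`, which forces `p ∣ x₁, x₂`: `-1` is a square
mod `p` because `p ≡ 1 (mod 4)`, while `u` is not, by Hensel's lemma. Finally `f` modulo `p²`
gives `p ∣ x₃`. (The paper's `x₁, …, x₅` are `x 0, …, x 4` here.)
-/

open Polynomial IsLocalRing

theorem eq_zero_and_eq_zero_of_sq_add_mul_sq_eq_zero {F : Type*} [Field F] {u a b : F}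
    (hneg : IsSquare (-1 : F)) (hu : ¬IsSquare u) (h : a ^ 2 + u * b ^ 2 = 0) :
    a = 0 ∧ b = 0 := by
  have hb : b = 0 := by
    by_contra hb
    obtain ⟨i, hi⟩ := hneg
    exact hu ⟨i * a / b, by field_simp; linear_combination h + a ^ 2 * hi⟩
  subst hb
  exact ⟨pow_eq_zero_iff two_ne_zero |>.1 (by simpa using h), rfl⟩

namespace PadicInt

variable {p : ℕ} [Fact p.Prime]

theorem toZMod_eq_zero_iff_dvd (x : ℤ_[p]) : toZMod x = 0 ↔ (p : ℤ_[p]) ∣ x := by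
  rw [← RingHom.mem_ker, ker_toZMod, maximalIdeal_eq_span_p, Ideal.mem_span_singleton]

theorem isSquare_of_isSquare_toZMod (hp : p ≠ 2) {u : ℤ_[p]} (hu : IsUnit u)
    (h : IsSquare (toZMod u)) : IsSquare u := by
  obtain ⟨r, hr⟩ := h
  obtain ⟨a, rfl⟩ := ZMod.ringHom_surjective toZMod r
  have hmem (x : ℤ_[p]) : x ∈ maximalIdeal ℤ_[p] ↔ toZMod x = 0 := by
    rw [← ker_toZMod, RingHom.mem_ker]
  have ha : toZMod a ≠ 0 := by
    rintro ha
    rw [ha, mul_zero] at hr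
    exact (hu.map toZMod).ne_zero hr
  have h2 : (2 : ZMod p) ≠ 0 := Ring.two_ne_zero (by rwa [ZMod.ringChar_zmod_n])
  have hroot : eval a (X ^ 2 - C u) ∈ maximalIdeal ℤ_[p] := by
    simp [hmem, hr, sq]
  have hsimple :
      IsUnit (Ideal.Quotient.mk (maximalIdeal ℤ_[p]) (eval a (derivative (X ^ 2 - C u)))) := by
    refine IsUnit.map _ (notMem_maximalIdeal.1 ?_)
    rw [hmem, derivative_sub, derivative_X_sq, derivative_C, sub_zero, eval_mul, eval_C, eval_X,
      map_mul, map_ofNat]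
    exact mul_ne_zero h2 ha
  obtain ⟨b, hb, -⟩ :=
    HenselianRing.is_henselian _ (monic_X_pow_sub_C u two_ne_zero) a hroot hsimple
  exact ⟨b, by simpa [sub_eq_zero, sq, eq_comm] using hb⟩

theorem dvd_and_dvd_of_dvd_sq_add_mul_sq (hp : p % 4 = 1)
    {u : ℤ_[p]} (hu : IsUnit u) (hsq : ¬IsSquare u) {a b : ℤ_[p]}
    (h : (p : ℤ_[p]) ∣ a ^ 2 + u * b ^ 2) : (p : ℤ_[p]) ∣ a ∧ (p : ℤ_[p]) ∣ b := by
  simp only [← toZMod_eq_zero_iff_dvd, map_add, map_mul, map_pow] at h ⊢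
  exact eq_zero_and_eq_zero_of_sq_add_mul_sq_eq_zero (ZMod.exists_sq_eq_neg_one_iff.2 (by omega))
    (fun h ↦ hsq (isSquare_of_isSquare_toZMod (by omega) hu h)) h

end PadicInt

section Forms

variable {R : Type*} [CommRing R]

def formF (u π : R) (s : ℕ) (x : Fin 5 → R) : R :=
  x 0 ^ 2 + u * x 1 ^ 2 + π * x 2 ^ 2 + u * π ^ (2 * s) * x 3 ^ 2 + π ^ (2 * s - 2) * x 4 ^ 2

def formG (u π : R) (s : ℕ) (x : Fin 5 → R) : R :=
  π ^ (4 * s + 1) * x 0 ^ 2 + π ^ (4 * s) * x 1 ^ 2 + u * π ^ (2 * s) * x 2 ^ 2 + x 3 ^ 2 +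
    π * x 4 ^ 2

theorem formF_smul (u π : R) (s : ℕ) (c : R) (x : Fin 5 → R) :
    formF u π s (c • x) = c ^ 2 * formF u π s x := by
  simp only [formF, Pi.smul_apply, smul_eq_mul]
  ring

theorem formG_smul (u π : R) (s : ℕ) (c : R) (x : Fin 5 → R) :
    formG u π s (c • x) = c ^ 2 * formG u π s x := by
  simp only [formG, Pi.smul_apply, smul_eq_mul]
  ring

theorem map_formF {S : Type*} [CommRing S] (φ : R →+* S) (u π : R) (s : ℕ) (x : Fin 5 → R) :
    φ (formF u π s x) = formF (φ u) (φ π) s (φ ∘ x) := by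
  simp [formF]

theorem map_formG {S : Type*} [CommRing S] (φ : R →+* S) (u π : R) (s : ℕ) (x : Fin 5 → R) :
    φ (formG u π s x) = formG (φ u) (φ π) s (φ ∘ x) := by
  simp [formG]

theorem dvd_of_formF_eq_zero_of_formG_eq_zero [IsDomain R] {u π : R} (hπ : Prime π)
    (hu : ∀ a b : R, π ∣ a ^ 2 + u * b ^ 2 → π ∣ a ∧ π ∣ b) {s : ℕ} (hs : 2 ≤ s)
    {x : Fin 5 → R} (hF : formF u π s x = 0) (hG : formG u π s x = 0) (i : Fin 5) :
    π ∣ x i := by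
  obtain ⟨t, rfl⟩ := Nat.exists_eq_add_of_le' hs
  simp only [formF, formG] at hF hG
  rw [show 2 * (t + 2) - 2 = 2 * t + 2 by omega] at hF
  have dvd_of_sq_dvd_mul_sq (a : R) (h : π ^ 2 ∣ π * a ^ 2) : π ∣ a :=
    hπ.dvd_of_dvd_pow (n := 2) ((mul_dvd_mul_iff_left hπ.ne_zero).1 (by rwa [← sq]))
  have h3 : π ∣ x 3 := hπ.dvd_of_dvd_pow (n := 2)
    ⟨-(π ^ (4 * t + 8) * x 0 ^ 2 + π ^ (4 * t + 7) * x 1 ^ 2 + u * π ^ (2 * t + 3) * x 2 ^ 2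
      + x 4 ^ 2), by linear_combination hG⟩
  obtain ⟨y3, hy3⟩ := h3
  have h4 : π ∣ x 4 := dvd_of_sq_dvd_mul_sq _
    ⟨-(π ^ (4 * t + 7) * x 0 ^ 2 + π ^ (4 * t + 6) * x 1 ^ 2 + u * π ^ (2 * t + 2) * x 2 ^ 2
      + y3 ^ 2), by linear_combination hG - (x 3 + π * y3) * hy3⟩
  obtain ⟨y4, hy4⟩ := h4
  obtain ⟨⟨y0, hy0⟩, ⟨y1, hy1⟩⟩ := hu (x 0) (x 1)
    ⟨-(x 2 ^ 2 + u * π ^ (2 * t + 5) * y3 ^ 2 + π ^ (2 * t + 3) * y4 ^ 2),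
      by linear_combination hF - (u * π ^ (2 * t + 4) * (x 3 + π * y3)) * hy3
        - π ^ (2 * t + 2) * (x 4 + π * y4) * hy4⟩
  have h2 : π ∣ x 2 := dvd_of_sq_dvd_mul_sq _
    ⟨-(y0 ^ 2 + u * y1 ^ 2 + u * π ^ (2 * t + 4) * y3 ^ 2 + π ^ (2 * t + 2) * y4 ^ 2),
      by linear_combination hF - (x 0 + π * y0) * hy0 - u * (x 1 + π * y1) * hy1
        - (u * π ^ (2 * t + 4) * (x 3 + π * y3)) * hy3 - π ^ (2 * t + 2) * (x 4 + π * y4) * hy4⟩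
  fin_cases i
  exacts [⟨y0, hy0⟩, ⟨y1, hy1⟩, h2, ⟨y3, hy3⟩, ⟨y4, hy4⟩]

end Forms

theorem exists_mul_eq_one_and_forall_norm_mul_le_one {K ι : Type*} [NormedDivisionRing K]
    [Finite ι] {x : ι → K} (hx : x ≠ 0) : ∃ c : K, ∃ i, c * x i = 1 ∧ ∀ j, ‖c * x j‖ ≤ 1 := by
  obtain ⟨j, hj⟩ := Function.ne_iff.1 hx
  have : Nonempty ι := ⟨j⟩
  obtain ⟨i, hi⟩ := Finite.exists_max fun j ↦ ‖x j‖
  have hi0 : x i ≠ 0 := norm_ne_zero_iff.1 ((norm_pos_iff.2 hj).trans_le (hi j)).ne'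
  refine ⟨(x i)⁻¹, i, inv_mul_cancel₀ hi0, fun j ↦ ?_⟩
  rw [norm_mul, norm_inv, inv_mul_le_one₀ (norm_pos_iff.2 hi0)]
  exact hi j

/-- Let `p ≡ 1 (mod 4)` be a prime, `u ∈ ℤ_p^×` a unit which is not a square and
`s ≥ 2` an integer.  Then the system of two quadratic forms
`f = x₁² + u x₂² + p x₃² + u p^{2s} x₄² + p^{2s-2} x₅²` and
`g = p^{4s+1} x₁² + p^{4s} x₂² + u p^{2s} x₃² + x₄² + p x₅²`
has no nontrivial common zero in `ℚ_p⁵`. -/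
theorem smooth_intersection_no_Qp_point
    (p : ℕ) [Fact p.Prime] (hp : p % 4 = 1)
    (u : ℤ_[p]ˣ) (hu : ¬ IsSquare (u : ℤ_[p]))
    (s : ℕ) (hs : 2 ≤ s) :
    ∀ x : Fin 5 → ℚ_[p],
      x 0 ^ 2 + (u : ℤ_[p]) * x 1 ^ 2 + (p : ℚ_[p]) * x 2 ^ 2 +
          (u : ℤ_[p]) * (p : ℚ_[p]) ^ (2 * s) * x 3 ^ 2 +
          (p : ℚ_[p]) ^ (2 * s - 2) * x 4 ^ 2 = 0 →
      (p : ℚ_[p]) ^ (4 * s + 1) * x 0 ^ 2 + (p : ℚ_[p]) ^ (4 * s) * x 1 ^ 2 +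
          (u : ℤ_[p]) * (p : ℚ_[p]) ^ (2 * s) * x 2 ^ 2 + x 3 ^ 2 +
          (p : ℚ_[p]) * x 4 ^ 2 = 0 →
      x = 0 := by
  intro x hf hg
  by_contra hx
  obtain ⟨c, i, hci, hc⟩ := exists_mul_eq_one_and_forall_norm_mul_le_one hx
  let z : Fin 5 → ℤ_[p] := fun j ↦ ⟨c * x j, hc j⟩
  have hinj : Function.Injective (PadicInt.Coe.ringHom (p := p)) := Subtype.coe_injective
  have hz : PadicInt.Coe.ringHom ∘ z = c • x := rfl
  have hF : formF (u : ℤ_[p]) p s z = 0 := by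
    rw [← map_eq_zero_iff _ hinj, map_formF, map_natCast, hz, formF_smul]
    exact mul_eq_zero_of_right _ hf
  have hG : formG (u : ℤ_[p]) p s z = 0 := by
    rw [← map_eq_zero_iff _ hinj, map_formG, map_natCast, hz, formG_smul]
    exact mul_eq_zero_of_right _ hg
  have hdvd := dvd_of_formF_eq_zero_of_formG_eq_zero PadicInt.prime_p
    (fun _ _ ↦ PadicInt.dvd_and_dvd_of_dvd_sq_add_mul_sq hp u.isUnit hu) hs hF hG i
  have hzi : z i = 1 := PadicInt.ext hci
  exact PadicInt.prime_p.not_dvd_one (hzi ▸ hdvd)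
end

section
/- Let p be an odd prime, E the elliptic curve y² = x(1-x)(x-p) over Q_p, F = Q_p(E), and v a nontrivial discrete valuation on F with completion F_v. If v(1-x) < 0, then 1-x is a square in F_v. -/
/-!
From `v (1 - x) > 1` we get `v x > 1`, so `c = 1 - p / x` satisfies `v (c - 1) < 1`, and the
curve equation gives `(1 - x) * c = (y / x) ^ 2`. So it suffices that `c` is a square in `F_v`.
Newton's iteration for `√c` converges in the complete field `F_v` as soon as `v 2 = 1`, and
`v 2 = 1` because `2` is a `p`-adic unit: for a unit `u` of `ℤ_[p]`, `u ^ (p - 1) ≡ 1 mod p`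
has a `(p + 1) ^ m`-th root for every `m` by Hensel's lemma, so `v u ^ (p - 1)` is infinitely
divisible in the value group `ℤ`, hence trivial.
-/

open Filter Topology
open scoped WithZero

instance Valued.nonarchimedeanRing {R Γ₀ : Type*} [Ring R] [LinearOrderedCommGroupWithZero Γ₀]
    [Valued R Γ₀] : NonarchimedeanRing R := by
  convert (Valued.v (R := R)).subgroups_basis.nonarchimedean
  rw [Valued.toUniformSpace_eq R Γ₀]
  rfl

lemma Valued.tendsto_zero_of_le_pow {R Γ₀ : Type*} [Ring R] [LinearOrderedCommGroupWithZero Γ₀]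
    [MulArchimedean Γ₀] [Valued R Γ₀] {f : ℕ → R} {δ : Γ₀} (hδ : δ < 1)
    (hf : ∀ n, Valued.v (f n) ≤ δ ^ n) : Tendsto f atTop (𝓝 0) := by
  rw [(Valued.hasBasis_nhds_zero R Γ₀).tendsto_right_iff]
  intro γ _
  obtain ⟨N, hN⟩ := exists_pow_lt₀ hδ (Units.map (MonoidWithZeroHom.ValueGroup₀.embedding
    (f := .ofClass (Valued.v : Valuation R Γ₀))) γ)
  filter_upwards [eventually_ge_atTop N] with n hn
  rw [Valuation.restrict_lt_iff_lt_embedding]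
  exact (hf n).trans_lt ((pow_le_pow_right_of_le_one' hδ.le hn).trans_lt hN)

section NewtonSqrt

variable {K Γ₀ : Type*} [Field K] [LinearOrderedCommGroupWithZero Γ₀]

def newtonSqrtStep (c z : K) : K := z - (z ^ 2 - c) / (2 * z)

lemma newtonSqrtStep_sq_sub (c : K) {z : K} (h2 : (2 : K) ≠ 0) (hz : z ≠ 0) :
    newtonSqrtStep c z ^ 2 - c = ((z ^ 2 - c) / (2 * z)) ^ 2 := by
  unfold newtonSqrtStep
  field_simp
  ring

lemma Valuation.map_newtonSqrtStep_sub (v : Valuation K Γ₀) (c : K) {z : K} (h2 : v 2 = 1)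
    (hz : v z = 1) : v (newtonSqrtStep c z - z) = v (z ^ 2 - c) := by
  rw [newtonSqrtStep, sub_sub_cancel_left, v.map_neg, v.map_div, v.map_mul, h2, hz, mul_one,
    div_one]

lemma Valuation.map_newtonSqrtStep_sq_sub (v : Valuation K Γ₀) (c : K) {z : K} (h2 : v 2 = 1)
    (hz : v z = 1) : v (newtonSqrtStep c z ^ 2 - c) = v (z ^ 2 - c) ^ 2 := by
  rw [newtonSqrtStep_sq_sub c (v.ne_zero_iff.mp (by simp [h2])) (v.ne_zero_iff.mp (by simp [hz])),
    v.map_pow, v.map_div, v.map_mul, h2, hz, mul_one, div_one]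

end NewtonSqrt

theorem Valued.isSquare_of_v_sub_one_lt_one {K Γ₀ : Type*} [Field K]
    [LinearOrderedCommGroupWithZero Γ₀] [MulArchimedean Γ₀] [Valued K Γ₀] [CompleteSpace K]
    (h2 : Valued.v (2 : K) = 1) {c : K} (hc : Valued.v (c - 1) < 1) : IsSquare c := by
  set v : Valuation K Γ₀ := Valued.v
  set δ := v (c - 1)
  set z : ℕ → K := fun k ↦ (newtonSqrtStep c)^[k] 1
  have hz_succ (k : ℕ) : z (k + 1) = newtonSqrtStep c (z k) := Function.iterate_succ_apply' ..
  have key (k : ℕ) : v (z k) = 1 ∧ v (z k ^ 2 - c) ≤ δ ^ 2 ^ k := by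
    induction k with
    | zero => simp [z, δ, ← v.map_neg (c - 1)]
    | succ k ih =>
      obtain ⟨hzk, hek⟩ := ih
      have hlt : v (z k ^ 2 - c) < 1 := hek.trans_lt (pow_lt_one₀ zero_le hc (by positivity))
      refine ⟨?_, ?_⟩
      · rw [hz_succ, ← sub_add_cancel (newtonSqrtStep c (z k)) (z k),
          v.map_add_eq_of_lt_right (by rwa [v.map_newtonSqrtStep_sub c h2 hzk, hzk]), hzk]
      · rw [hz_succ, v.map_newtonSqrtStep_sq_sub c h2 hzk, pow_succ 2 k, pow_mul]
        exact pow_le_pow_left₀ zero_le hek 2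
  have hbound (k : ℕ) : v (z k ^ 2 - c) ≤ δ ^ k :=
    (key k).2.trans (pow_le_pow_right_of_le_one' hc.le Nat.lt_two_pow_self.le)
  have hcauchy : CauchySeq z := by
    refine NonarchimedeanAddGroup.cauchySeq_of_tendsto_sub_nhds_zero
      (Valued.tendsto_zero_of_le_pow hc fun k ↦ ?_)
    rw [hz_succ, v.map_newtonSqrtStep_sub c h2 (key k).1]
    exact hbound k
  obtain ⟨L, hL⟩ := cauchySeq_tendsto_of_complete hcauchy
  have hL2 : L ^ 2 - c = 0 :=
    tendsto_nhds_unique ((hL.pow 2).sub tendsto_const_nhds) (Valued.tendsto_zero_of_le_pow hc hbound)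
  exact ⟨L, by rw [← sq, sub_eq_zero.mp hL2]⟩

namespace PadicInt

variable {p : ℕ} [Fact p.Prime]

theorem norm_pow_card_sub_one_sub_one_lt_one {u : ℤ_[p]} (hu : IsUnit u) :
    ‖u ^ (p - 1) - 1‖ < 1 := by
  rw [← mem_nonunits, ← IsLocalRing.mem_maximalIdeal, ← ker_toZMod, RingHom.mem_ker, map_sub,
    map_pow, map_one, ZMod.pow_card_sub_one_eq_one (hu.map toZMod).ne_zero, sub_self]

theorem exists_pow_eq_of_norm_sub_one_lt_one {n : ℕ} (hn : p.Coprime n) {w : ℤ_[p]}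
    (hw : ‖w - 1‖ < 1) : ∃ z : ℤ_[p], z ^ n = w := by
  have hderiv : ‖(Polynomial.X ^ n - Polynomial.C w).derivative.aeval (1 : ℤ_[p])‖ = 1 := by
    have : (Polynomial.X ^ n - Polynomial.C w).derivative.aeval (1 : ℤ_[p]) = (n : ℤ_[p]) := by
      simp [Polynomial.derivative_X_pow]
    rw [this, norm_natCast_eq_one_iff]
    exact hn
  obtain ⟨z, hz, -⟩ := hensels_lemma (F := Polynomial.X ^ n - Polynomial.C w) (a := 1)
    (by rwa [hderiv, one_pow, map_sub, map_pow, Polynomial.aeval_X, Polynomial.aeval_C, one_pow,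
      norm_sub_rev])
  exact ⟨z, by simpa [sub_eq_zero] using hz⟩

end PadicInt

theorem WithZero.eq_one_of_forall_exists_pow_eq {a : ℤᵐ⁰} (ha : a ≠ 0) {n : ℕ} (hn : 1 < n)
    (h : ∀ m, ∃ b : ℤᵐ⁰, b ^ n ^ m = a) : a = 1 := by
  have hdvd (m : ℕ) : (n : ℤ) ^ m ∣ a.log := by
    obtain ⟨b, rfl⟩ := h m
    exact ⟨b.log, by rw [log_pow, nsmul_eq_mul]; push_cast; rfl⟩
  have hlog : a.log = 0 := by
    by_contra hne
    obtain ⟨m, hm⟩ := Int.finiteMultiplicity_iff.mpr ⟨by rw [Int.natAbs_natCast]; exact hn.ne', hne⟩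
    exact hm (hdvd (m + 1))
  rw [← exp_log ha, hlog, exp_zero]

theorem Valuation.map_padicInt_eq_one_of_isUnit {p : ℕ} [hp : Fact p.Prime] {K : Type*} [Field K]
    (ψ : ℤ_[p] →+* K) (v : Valuation K ℤᵐ⁰) {u : ℤ_[p]} (hu : IsUnit u) : v (ψ u) = 1 := by
  have hp2 := hp.out.two_le
  have hv0 : v (ψ u) ≠ 0 := v.ne_zero_iff.mpr (hu.map ψ).ne_zero
  have hpow : v (ψ u) ^ (p - 1) = 1 := by
    refine WithZero.eq_one_of_forall_exists_pow_eq (pow_ne_zero _ hv0) (n := p + 1) (by omega)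
      fun m ↦ ?_
    obtain ⟨z, hz⟩ := PadicInt.exists_pow_eq_of_norm_sub_one_lt_one
      ((Nat.coprime_self_add_right.mpr (Nat.coprime_one_right p)).pow_right m)
      (PadicInt.norm_pow_card_sub_one_sub_one_lt_one hu)
    exact ⟨v (ψ z), by rw [← map_pow, ← map_pow, hz, map_pow, map_pow]⟩
  exact (pow_eq_one_iff_left (by omega)).mp hpow

theorem Valuation.map_two_eq_one_of_odd {p : ℕ} [Fact p.Prime] (hp : Odd p) {K : Type*} [Field K]
    (ψ : ℤ_[p] →+* K) (v : Valuation K ℤᵐ⁰) : v 2 = 1 := by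
  have h2 : IsUnit (2 : ℤ_[p]) := PadicInt.isUnit_iff.mpr <| by
    exact_mod_cast PadicInt.norm_natCast_eq_one_iff.mpr (Nat.coprime_two_right.mpr hp)
  simpa [map_ofNat] using v.map_padicInt_eq_one_of_isUnit ψ h2

theorem Valuation.map_natCast_le_one {R Γ₀ : Type*} [Ring R] [LinearOrderedCommMonoidWithZero Γ₀]
    (v : Valuation R Γ₀) (n : ℕ) : v (n : R) ≤ 1 := by
  induction n with
  | zero => simp
  | succ n ih =>
    rw [Nat.cast_succ]
    exact (v.map_add _ _).trans (max_le ih v.map_one.le)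

theorem one_sub_x_square_in_completion_of_neg_val_general
    (p : ℕ) [Fact p.Prime] (hp : Odd p)
    (F : Type) [Field F] [Algebra (RatFunc ℚ_[p]) F]
    (y : F)
    (hy : y ^ 2 = algebraMap (RatFunc ℚ_[p]) F
      (RatFunc.X * (1 - RatFunc.X) * (RatFunc.X - RatFunc.C (p : ℚ_[p]))))
    (v : Valuation F (WithZero (Multiplicative ℤ)))
    (Fv : Type) [Field Fv] [Valued Fv (WithZero (Multiplicative ℤ))] [CompleteSpace Fv]
    [Algebra F Fv]
    (hcompat : ∀ f : F, Valued.v (algebraMap F Fv f) = v f)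
    (hneg : 1 < v (algebraMap (RatFunc ℚ_[p]) F (1 - RatFunc.X))) :
    IsSquare (algebraMap F Fv (algebraMap (RatFunc ℚ_[p]) F (1 - RatFunc.X))) := by
  simp only [map_sub, map_one] at hneg ⊢
  set x := algebraMap (RatFunc ℚ_[p]) F RatFunc.X
  have hcurve : y ^ 2 = x * (1 - x) * (x - p) := by simp [hy, x]
  have hx : 1 < v x := by
    rwa [← sub_sub_cancel 1 x, v.map_sub_eq_of_lt_right (by rwa [v.map_one])]
  have hx0 : x ≠ 0 := v.ne_zero_iff.mp (zero_lt_one.trans hx).ne'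
  set c := 1 - p / x
  have hc : Valued.v (algebraMap F Fv c - 1) < 1 := by
    rw [← map_one (algebraMap F Fv), ← map_sub, hcompat, sub_sub_cancel_left, v.map_neg,
      v.map_div, div_lt_one₀ (zero_lt_one.trans hx)]
    exact (v.map_natCast_le_one p).trans_lt hx
  have h2 : Valued.v (2 : Fv) = 1 := Valued.v.map_two_eq_one_of_odd hp ((algebraMap F Fv).comp
    ((algebraMap (RatFunc ℚ_[p]) F).comp (RatFunc.C.comp PadicInt.Coe.ringHom)))
  have hsq_c := Valued.isSquare_of_v_sub_one_lt_one h2 hc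
  have hprod : (1 - x) * c = (y / x) ^ 2 := by
    simp only [c]
    field_simp
    linear_combination -hcurve
  have hsq_prod : IsSquare (algebraMap F Fv ((1 - x) * c)) := hprod ▸ (IsSquare.sq _).map _
  have hc0 : algebraMap F Fv c ≠ 0 := by
    rintro h; simp [h] at hc
  simpa [hc0] using hsq_prod.div hsq_c

/-- Let `p` be an odd prime, `E` the elliptic curve `y² = x(1-x)(x-p)` over `ℚ_p`,
`F = ℚ_p(E)` its function field (the quadratic extension of `ℚ_p(x)` generated by `y`),
and `v` a nontrivial rank-one discrete valuation on `F` (value group `ℤ`; here written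
multiplicatively, with values in `ℤₘ₀ = WithZero (Multiplicative ℤ)` and `v` surjective),
with completion `F_v` (a complete valued field containing `F` as a dense subfield, whose
valuation extends `v`).  If `v(1-x) < 0` (multiplicatively: `v(1-x) > 1`), then `1 - x`
is a square in `F_v`. -/
theorem one_sub_x_square_in_completion_of_neg_val
    (p : ℕ) [Fact p.Prime] (hp : Odd p)
    (F : Type) [Field F] [Algebra (RatFunc ℚ_[p]) F]
    (y : F)
    (hy : y ^ 2 = algebraMap (RatFunc ℚ_[p]) F
      (RatFunc.X * (1 - RatFunc.X) * (RatFunc.X - RatFunc.C (p : ℚ_[p]))))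
    (hgen : Algebra.adjoin (RatFunc ℚ_[p]) {y} = ⊤)
    (hdeg : Module.finrank (RatFunc ℚ_[p]) F = 2)
    (v : Valuation F (WithZero (Multiplicative ℤ)))
    (hv : Function.Surjective v)
    (Fv : Type) [Field Fv] [Valued Fv (WithZero (Multiplicative ℤ))] [CompleteSpace Fv]
    [Algebra F Fv]
    (hcompat : ∀ f : F, Valued.v (algebraMap F Fv f) = v f)
    (hdense : DenseRange (algebraMap F Fv))
    (hneg : 1 < v (algebraMap (RatFunc ℚ_[p]) F (1 - RatFunc.X))) :
    IsSquare (algebraMap F Fv (algebraMap (RatFunc ℚ_[p]) F (1 - RatFunc.X))) :=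
  one_sub_x_square_in_completion_of_neg_val_general p hp F y hy v Fv hcompat hneg
end
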